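/- Fix an integer k ≥ 2 and let W be a k × k row-stochastic, strictly positive, invertible matrix with image simplex Δ*. Fix r₀ with 0 < r₀ ≤ (2·log₂ e)/9, set r = √(r₀/(2·log₂ e)), let N = ⌊1/r⌋, and let N* be the set of probability vectors in Δ* whose coordinates are all integer multiples of 1/N; for P ∈ N* let R_P be its neighbor set. Let p_min = inf{ P y : P ∈ Δ*, y ∈ Fin k } and p_max = sup{ P y : P ∈ Δ*, y ∈ Fin k } (strict positivity of W gives 0 < p_min ≤ p_max < 1). Then for every P ∈ N* and every Q ∈ R_P, the variance of the log-likelihood ratio satisfies (65·log₂ e / 72)·r₀ ≤ V(P‖Q) ≤ (5·log₂ e / (2·p_min·(1−p_max)²))·r₀. -/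

import Mathlib

/-!
Only the coordinates `a`, `b` where `Q` differs from `P` carry a nonzero log-likelihood ratio
`L = log₂ (P / Q)`, and `ε = 1 / N` satisfies `r ≤ ε < 3r/2` because `r ≤ 1/3`.

Lower bound: a variance is at least the contribution `P a · P b · (L b - L a)²` of one pair of
atoms, and `log x ≤ x - 1` makes the jump `L b - L a` at least `(ε / P b + ε / Q a) / ln 2`. Since
`P a` is a positive multiple of `ε`, `Q a ≤ 2 P a`, and AM-GM gives `V ≥ 2ε² / ln² 2 ≥ r₀ log₂ e`.

Upper bound: a variance is at most the second moment, and `|log x| ≤ |x - 1| / √x` (i.e.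
`|t| ≤ |sinh t|`) bounds the second moment by the χ²-divergence `ε² / Q a + ε² / Q b`, which is at
most `2ε² / p_min`.
-/

/-- Kullback–Leibler divergence in bits between two (strictly positive) probability
vectors on `Fin k`. -/
noncomputable def klD {k : ℕ} (P Q : Fin k → ℝ) : ℝ :=
  ∑ y, P y * Real.logb 2 (P y / Q y)

/-- Variance of the log-likelihood ratio (in bits). -/
noncomputable def Vllr {k : ℕ} (P Q : Fin k → ℝ) : ℝ :=
  ∑ y, P y * (Real.logb 2 (P y / Q y) - klD P Q) ^ 2

/-- `Q` is a neighbor of `P` at grid spacing `1/N`. -/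
def IsNeighbor {k : ℕ} (N : ℕ) (P Q : Fin k → ℝ) : Prop :=
  ∃ a b : Fin k, a ≠ b ∧ Q a = P a + 1 / N ∧ Q b = P b - 1 / N ∧
    ∀ i, i ≠ a → i ≠ b → Q i = P i

open Real Finset

namespace Real

theorem sq_log_le_sq_sub_one_div {x : ℝ} (hx : 0 < x) : log x ^ 2 ≤ (x - 1) ^ 2 / x := by
  have hs : 0 < √x := sqrt_pos.2 hx
  have habs : |log √x| ≤ |sinh (log √x)| := by
    rw [abs_sinh]
    exact self_le_sinh_iff.2 (abs_nonneg _)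
  calc log x ^ 2 = 4 * |log √x| ^ 2 := by rw [sq_abs, log_sqrt hx.le]; ring
    _ ≤ 4 * |sinh (log √x)| ^ 2 := by gcongr
    _ = (x - 1) ^ 2 / x := by
      rw [sq_abs, sinh_log hs]
      field_simp
      rw [sq_sqrt hx.le]
      ring

theorem mul_sq_log_div_le {p q : ℝ} (hp : 0 < p) (hq : 0 < q) :
    p * log (p / q) ^ 2 ≤ (p - q) ^ 2 / q := by
  calc p * log (p / q) ^ 2 ≤ p * ((p / q - 1) ^ 2 / (p / q)) := by
        gcongr
        exact sq_log_le_sq_sub_one_div (div_pos hp hq)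
    _ = (p - q) ^ 2 / q := by field_simp

theorem sub_div_le_log_div {p q : ℝ} (hp : 0 < p) (hq : 0 < q) : (p - q) / p ≤ log (p / q) := by
  calc (p - q) / p = 1 - (p / q)⁻¹ := by field_simp
    _ ≤ log (p / q) := one_sub_inv_le_log_of_pos (div_pos hp hq)

theorem log_div_le_sub_div {p q : ℝ} (hp : 0 < p) (hq : 0 < q) : log (p / q) ≤ (p - q) / q := by
  calc log (p / q) ≤ p / q - 1 := log_le_sub_one_of_pos (div_pos hp hq)
    _ = (p - q) / q := by field_simp

end Real

section Variance

variable {ι : Type*} [Fintype ι] {P : ι → ℝ}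

theorem add_le_sum_of_nonneg {f : ι → ℝ} (hf : ∀ y, 0 ≤ f y) {a b : ι} (hab : a ≠ b) :
    f a + f b ≤ ∑ y, f y := by
  classical
  rw [← sum_pair hab]
  exact sum_le_sum_of_subset_of_nonneg (subset_univ _) fun y _ _ => hf y

theorem sum_mul_sub_sq_le_sum_mul_sq (hP1 : ∑ y, P y = 1) (g : ι → ℝ) :
    ∑ y, P y * (g y - ∑ z, P z * g z) ^ 2 ≤ ∑ y, P y * g y ^ 2 := by
  set c := ∑ z, P z * g z
  have hexpand : ∀ y, P y * (g y - c) ^ 2 = P y * g y ^ 2 - 2 * c * (P y * g y) + c ^ 2 * P y :=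
    fun y => by ring
  simp only [hexpand, sum_add_distrib, sum_sub_distrib, ← mul_sum, hP1]
  nlinarith [sq_nonneg c]

/-- Uses `p (x - c)² + q (y - c)² ≥ pq (x - y)² / (p + q)` together with `p + q ≤ 1`. -/
theorem mul_mul_sq_sub_le_sum_mul_sq_sub (hP : ∀ y, 0 ≤ P y) (hP1 : ∑ y, P y = 1) {a b : ι}
    (hab : a ≠ b) (g : ι → ℝ) (c : ℝ) :
    P a * P b * (g a - g b) ^ 2 ≤ ∑ y, P y * (g y - c) ^ 2 := by
  have hpair : P a + P b ≤ 1 := hP1 ▸ add_le_sum_of_nonneg hP hab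
  have hsub : P a * (g a - c) ^ 2 + P b * (g b - c) ^ 2 ≤ ∑ y, P y * (g y - c) ^ 2 :=
    add_le_sum_of_nonneg (f := fun y => P y * (g y - c) ^ 2)
      (fun y => mul_nonneg (hP y) (sq_nonneg _)) hab
  nlinarith [sq_nonneg (P a * (g a - c) + P b * (g b - c)),
    mul_nonneg (sub_nonneg.2 hpair) (add_nonneg (mul_nonneg (hP a) (sq_nonneg (g a - c)))
      (mul_nonneg (hP b) (sq_nonneg (g b - c))))]

end Variance

noncomputable def chiSqDiv {ι : Type*} [Fintype ι] (P Q : ι → ℝ) : ℝ :=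
  ∑ y, (P y - Q y) ^ 2 / Q y

section Neighbors

variable {k : ℕ} {P Q : Fin k → ℝ}

theorem Vllr_le_chiSqDiv_div (hP : ∀ y, 0 < P y) (hP1 : ∑ y, P y = 1) (hQ : ∀ y, 0 < Q y) :
    Vllr P Q ≤ chiSqDiv P Q / log 2 ^ 2 := by
  calc Vllr P Q ≤ ∑ y, P y * logb 2 (P y / Q y) ^ 2 := sum_mul_sub_sq_le_sum_mul_sq hP1 _
    _ = (∑ y, P y * log (P y / Q y) ^ 2) / log 2 ^ 2 := by
      simp only [logb, div_pow, mul_div_assoc', sum_div]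
    _ ≤ chiSqDiv P Q / log 2 ^ 2 := by
      unfold chiSqDiv
      gcongr with y
      exact mul_sq_log_div_le (hP y) (hQ y)

theorem chiSqDiv_le_of_isNeighbor {N : ℕ} {m : ℝ} (hm : 0 < m) (hQ : ∀ y, m ≤ Q y)
    (h : IsNeighbor N P Q) : chiSqDiv P Q ≤ 2 * (1 / N : ℝ) ^ 2 / m := by
  obtain ⟨a, b, hab, hQa, hQb, hrest⟩ := h
  have ha : (P a - Q a) ^ 2 = (1 / N : ℝ) ^ 2 := by rw [hQa]; ring
  have hb : (P b - Q b) ^ 2 = (1 / N : ℝ) ^ 2 := by rw [hQb]; ring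
  rw [chiSqDiv, Fintype.sum_eq_add a b hab (fun y hy => by simp [hrest y hy.1 hy.2]), ha, hb,
    two_mul, add_div]
  gcongr <;> exact hQ _

theorem one_div_le_natCast_div {n N : ℕ} (h : 0 < (n : ℝ) / N) : 1 / (N : ℝ) ≤ n / N := by
  have hn : n ≠ 0 := by rintro rfl; simp at h
  gcongr
  exact_mod_cast Nat.one_le_iff_ne_zero.2 hn

theorem two_mul_sq_div_le_Vllr {N : ℕ} (hP : ∀ y, 0 < P y) (hP1 : ∑ y, P y = 1)
    (hgrid : ∀ y, ∃ n : ℕ, P y = n / N) (hQ : ∀ y, 0 < Q y) (h : IsNeighbor N P Q) :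
    2 * (1 / N : ℝ) ^ 2 / log 2 ^ 2 ≤ Vllr P Q := by
  obtain ⟨a, b, hab, hQa, hQb, -⟩ := h
  have hεa : 1 / (N : ℝ) ≤ P a := by
    obtain ⟨n, hn⟩ := hgrid a
    exact hn ▸ one_div_le_natCast_div (hn ▸ hP a)
  have hε : 0 ≤ 1 / (N : ℝ) := by positivity
  generalize (1 / N : ℝ) = ε at *
  have hb : ε / P b ≤ log (P b / Q b) := by
    have := sub_div_le_log_div (hP b) (hQ b)
    rwa [show P b - Q b = ε by rw [hQb]; ring] at this
  have ha : log (P a / Q a) ≤ -(ε / Q a) := by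
    have := log_div_le_sub_div (hP a) (hQ a)
    rwa [show P a - Q a = -ε by rw [hQa]; ring, neg_div] at this
  have hjump : (ε / P b + ε / Q a) / log 2 ≤ logb 2 (P b / Q b) - logb 2 (P a / Q a) := by
    rw [logb, logb, ← sub_div]
    gcongr
    linarith
  have hPb := hP b
  have hQa' := hQ a
  -- AM-GM, with `Q a ≤ 2 * P a`
  have hamgm : 2 * ε ^ 2 ≤ P b * P a * (ε / P b + ε / Q a) ^ 2 := by
    rw [div_add_div _ _ hPb.ne' hQa'.ne', div_pow, mul_div_assoc', le_div_iff₀ (by positivity)]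
    nlinarith [mul_nonneg (mul_nonneg (sq_nonneg ε) hPb.le)
        (mul_nonneg (by linarith : 0 ≤ 2 * P a - Q a) (sq_nonneg (Q a + P b))),
      mul_nonneg (mul_nonneg (sq_nonneg ε) (mul_nonneg hPb.le hQa'.le)) (sq_nonneg (Q a - P b))]
  calc 2 * ε ^ 2 / log 2 ^ 2 ≤ P b * P a * ((ε / P b + ε / Q a) / log 2) ^ 2 := by
        rw [div_pow, mul_div_assoc']
        gcongr
    _ ≤ P b * P a * (logb 2 (P b / Q b) - logb 2 (P a / Q a)) ^ 2 := by
        gcongr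
        exact (mul_pos hPb (hP a)).le
    _ ≤ Vllr P Q := mul_mul_sq_sub_le_sum_mul_sq_sub (fun y => (hP y).le) hP1 hab.symm
        (fun y => logb 2 (P y / Q y)) (klD P Q)

theorem Vllr_le_of_isNeighbor {N : ℕ} {m : ℝ} (hm : 0 < m) (hP : ∀ y, 0 < P y)
    (hP1 : ∑ y, P y = 1) (hQ : ∀ y, m ≤ Q y) (h : IsNeighbor N P Q) :
    Vllr P Q ≤ 2 * (1 / N : ℝ) ^ 2 / log 2 ^ 2 / m := by
  calc Vllr P Q ≤ chiSqDiv P Q / log 2 ^ 2 :=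
        Vllr_le_chiSqDiv_div hP hP1 fun y => hm.trans_le (hQ y)
    _ ≤ 2 * (1 / N : ℝ) ^ 2 / m / log 2 ^ 2 := by
        gcongr
        exact chiSqDiv_le_of_isNeighbor hm hQ h
    _ = 2 * (1 / N : ℝ) ^ 2 / log 2 ^ 2 / m := div_right_comm _ _ _

end Neighbors

theorem csInf_csSup_bounds_of_subset_Icc {α : Type*} [ConditionallyCompleteLattice α]
    {S : Set α} {lo hi x : α} (hS : S ⊆ Set.Icc lo hi) (hx : x ∈ S) :
    lo ≤ sInf S ∧ sInf S ≤ x ∧ x ≤ sSup S ∧ sSup S ≤ hi :=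
  ⟨le_csInf ⟨x, hx⟩ fun _ hy => (hS hy).1, csInf_le (bddBelow_Icc.mono hS) hx,
    le_csSup (bddAbove_Icc.mono hS) hx, csSup_le ⟨x, hx⟩ fun _ hy => (hS hy).2⟩

section OutputSimplex

variable {ι κ : Type*} [Fintype ι] {W : Matrix ι κ ℝ} {f : κ → ℝ} {m : ℝ}

def outputSimplex (W : Matrix ι κ ℝ) : Set (κ → ℝ) :=
  {f | ∃ p : ι → ℝ, (∀ i, 0 ≤ p i) ∧ (∑ i, p i = 1) ∧ ∀ y, f y = ∑ x, p x * W x y}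

def outputValues (W : Matrix ι κ ℝ) : Set ℝ :=
  {x | ∃ f ∈ outputSimplex W, ∃ y, f y = x}

theorem sum_eq_one_of_mem_outputSimplex [Fintype κ] (hrow : ∀ x, ∑ y, W x y = 1)
    (hf : f ∈ outputSimplex W) : ∑ y, f y = 1 := by
  obtain ⟨p, -, hp1, hpf⟩ := hf
  simp only [hpf]
  rw [sum_comm]
  simp only [← mul_sum, hrow, mul_one, hp1]

theorem le_apply_of_mem_outputSimplex (hm : ∀ x y, m ≤ W x y) (hf : f ∈ outputSimplex W)
    (y : κ) : m ≤ f y := by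
  obtain ⟨p, hp0, hp1, hpf⟩ := hf
  calc m = ∑ x, p x * m := by rw [← sum_mul, hp1, one_mul]
    _ ≤ f y := hpf y ▸ sum_le_sum fun x _ => mul_le_mul_of_nonneg_left (hm x y) (hp0 x)

theorem outputValues_subset_Icc [Fintype κ] [Nontrivial κ] (hm0 : 0 ≤ m) (hm : ∀ x y, m ≤ W x y)
    (hrow : ∀ x, ∑ y, W x y = 1) :
    outputValues W ⊆ Set.Icc m (1 - m) := by
  rintro _ ⟨f, hf, y, rfl⟩
  obtain ⟨z, hzy⟩ := exists_ne y
  have hpair := add_le_sum_of_nonneg (fun y => hm0.trans (le_apply_of_mem_outputSimplex hm hf y))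
    hzy.symm
  rw [sum_eq_one_of_mem_outputSimplex hrow hf] at hpair
  have := le_apply_of_mem_outputSimplex hm hf z
  exact ⟨le_apply_of_mem_outputSimplex hm hf y, by linarith⟩

theorem outputValues_bounds [Fintype κ] [Nonempty ι] [Nontrivial κ] (hpos : ∀ x y, 0 < W x y)
    (hrow : ∀ x, ∑ y, W x y = 1) (hf : f ∈ outputSimplex W) (y : κ) :
    0 < sInf (outputValues W) ∧ sInf (outputValues W) ≤ f y ∧ f y ≤ sSup (outputValues W) ∧
      sSup (outputValues W) < 1 := by
  obtain ⟨⟨x₀, y₀⟩, hmin⟩ := Finite.exists_min fun e : ι × κ => W e.1 e.2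
  obtain ⟨hlo, hinf, hsup, hhi⟩ := csInf_csSup_bounds_of_subset_Icc
    (outputValues_subset_Icc (hpos x₀ y₀).le (fun x y => hmin (x, y)) hrow) ⟨f, hf, y, rfl⟩
  exact ⟨(hpos x₀ y₀).trans_le hlo, hinf, hsup, hhi.trans_lt (by linarith [hpos x₀ y₀])⟩

end OutputSimplex

theorem le_one_div_floor_one_div {r : ℝ} (hr : 0 < r) (hr1 : r ≤ 1) :
    r ≤ 1 / ⌊1 / r⌋₊ := by
  have hN : (0 : ℝ) < ⌊1 / r⌋₊ := by
    exact_mod_cast Nat.floor_pos.2 (by rwa [le_div_iff₀ hr, one_mul])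
  rw [le_one_div hr hN]
  exact Nat.floor_le (by positivity)

theorem one_div_floor_one_div_lt {r : ℝ} (hr : 0 < r) (hr3 : r ≤ 1 / 3) :
    1 / ⌊1 / r⌋₊ < 3 / 2 * r := by
  have hN : (0 : ℝ) < ⌊1 / r⌋₊ := by
    exact_mod_cast Nat.floor_pos.2 (by rw [le_div_iff₀ hr, one_mul]; linarith)
  rw [one_div_lt hN (by positivity)]
  calc 1 / (3 / 2 * r) ≤ 1 / r - 1 := by
        rw [div_sub_one hr.ne', div_le_div_iff₀ (by positivity) hr]
        nlinarith
    _ < ⌊1 / r⌋₊ := Nat.sub_one_lt_floor _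

theorem grid_spacing_sq_bounds {r₀ r : ℝ} (hr₀ : 0 < r₀) (hr₀' : r₀ ≤ 2 * logb 2 (exp 1) / 9)
    (hr : r = √(r₀ / (2 * logb 2 (exp 1)))) :
    logb 2 (exp 1) * r₀ ≤ 2 * (1 / ⌊1 / r⌋₊ : ℝ) ^ 2 / log 2 ^ 2 ∧
      2 * (1 / ⌊1 / r⌋₊ : ℝ) ^ 2 / log 2 ^ 2 ≤ 9 / 4 * (logb 2 (exp 1) * r₀) := by
  have hlog2 : 0 < log 2 := log_pos one_lt_two
  rw [logb, log_exp] at hr hr₀' ⊢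
  have hr0 : 0 < r := hr ▸ sqrt_pos.2 (by positivity)
  have hsq : r ^ 2 = r₀ * log 2 / 2 := by
    rw [hr, sq_sqrt (by positivity)]
    field_simp
  have hr3 : r ≤ 1 / 3 := by
    have : r₀ * log 2 ≤ 2 / 9 := by
      calc r₀ * log 2 ≤ 2 * (1 / log 2) / 9 * log 2 := by gcongr
        _ = 2 / 9 := by field_simp
    nlinarith
  have hbits : 2 * r ^ 2 / log 2 ^ 2 = 1 / log 2 * r₀ := by
    rw [hsq]
    field_simp
  constructor
  · rw [← hbits]
    gcongr
    exact le_one_div_floor_one_div hr0 (by linarith)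
  · calc 2 * (1 / ⌊1 / r⌋₊ : ℝ) ^ 2 / log 2 ^ 2 ≤ 2 * (3 / 2 * r) ^ 2 / log 2 ^ 2 := by
          gcongr
          exact (one_div_floor_one_div_lt hr0 hr3).le
      _ = 9 / 4 * (1 / log 2 * r₀) := by rw [← hbits]; ring

theorem llr_variance_bounds_general (k : ℕ)
    (W : Matrix (Fin k) (Fin k) ℝ)
    (hpos : ∀ x y, 0 < W x y) (hrow : ∀ x, ∑ y, W x y = 1)
    (Δs : Set (Fin k → ℝ))
    (hΔs : Δs = {f | ∃ p : Fin k → ℝ, (∀ i, 0 ≤ p i) ∧ (∑ i, p i = 1) ∧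
        ∀ y, f y = ∑ x, p x * W x y})
    (pmin pmax : ℝ)
    (hpmin : pmin = sInf {x : ℝ | ∃ f ∈ Δs, ∃ y : Fin k, f y = x})
    (hpmax : pmax = sSup {x : ℝ | ∃ f ∈ Δs, ∃ y : Fin k, f y = x})
    (r₀ : ℝ) (hr₀ : 0 < r₀) (hr₀' : r₀ ≤ 2 * Real.logb 2 (Real.exp 1) / 9)
    (r : ℝ) (hr : r = Real.sqrt (r₀ / (2 * Real.logb 2 (Real.exp 1))))
    (N : ℕ) (hN : N = ⌊1 / r⌋₊)
    (Nstar : Set (Fin k → ℝ))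
    (hNstar : Nstar = {f ∈ Δs | ∀ i, ∃ a : ℕ, f i = (a : ℝ) / N}) :
    ∀ P ∈ Nstar, ∀ Q ∈ Nstar, IsNeighbor N P Q →
      (65 * Real.logb 2 (Real.exp 1) / 72) * r₀ ≤ Vllr P Q ∧
      Vllr P Q ≤ (5 * Real.logb 2 (Real.exp 1) / (2 * pmin * (1 - pmax) ^ 2)) * r₀ := by
  replace hΔs : Δs = outputSimplex W := hΔs
  subst hΔs hNstar hN
  replace hpmin : pmin = sInf (outputValues W) := hpmin
  replace hpmax : pmax = sSup (outputValues W) := hpmax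
  rintro P ⟨hPΔ, hPgrid⟩ Q ⟨hQΔ, -⟩ hPQ
  obtain ⟨a, b, hab, -⟩ := id hPQ
  have : Nontrivial (Fin k) := nontrivial_of_ne a b hab
  have hbounds := fun f (hf : f ∈ outputSimplex W) y => outputValues_bounds hpos hrow hf y
  rw [← hpmin, ← hpmax] at hbounds
  have hP : ∀ y, 0 < P y := fun y => (hbounds P hPΔ y).1.trans_le (hbounds P hPΔ y).2.1
  have hQ : ∀ y, 0 < Q y := fun y => (hbounds Q hQΔ y).1.trans_le (hbounds Q hQΔ y).2.1
  have hP1 := sum_eq_one_of_mem_outputSimplex hrow hPΔ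
  obtain ⟨hlow, hup⟩ := grid_spacing_sq_bounds hr₀ hr₀' hr
  have hcr₀ : 0 < logb 2 (exp 1) * r₀ :=
    mul_pos (logb_pos one_lt_two (one_lt_exp_iff.2 one_pos)) hr₀
  constructor
  · calc 65 * logb 2 (exp 1) / 72 * r₀ ≤ 2 * (1 / ⌊1 / r⌋₊ : ℝ) ^ 2 / log 2 ^ 2 := by linarith
      _ ≤ Vllr P Q := two_mul_sq_div_le_Vllr hP hP1 hPgrid hQ hPQ
  · obtain ⟨hpmin_pos, -, hPa_le, hpmax_lt⟩ := hbounds P hPΔ a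
    have hconst : 9 / 4 ≤ 5 / (2 * (1 - pmax) ^ 2) := by
      have := hP a
      rw [le_div_iff₀ (by nlinarith)]
      nlinarith
    calc Vllr P Q ≤ 2 * (1 / ⌊1 / r⌋₊ : ℝ) ^ 2 / log 2 ^ 2 / pmin :=
          Vllr_le_of_isNeighbor hpmin_pos hP hP1 (fun y => (hbounds Q hQΔ y).2.1) hPQ
      _ ≤ 9 / 4 * (logb 2 (exp 1) * r₀) / pmin := by gcongr
      _ ≤ 5 / (2 * (1 - pmax) ^ 2) * (logb 2 (exp 1) * r₀) / pmin := by gcongr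
      _ = 5 * logb 2 (exp 1) / (2 * pmin * (1 - pmax) ^ 2) * r₀ := by field_simp

/-- for grid points `P ∈ N*` and neighbors `Q ∈ R_P` at packing radius
`r₀ ≤ (2·log₂ e)/9`, the variance of the log-likelihood ratio satisfies
`(65·log₂ e/72)·r₀ ≤ V(P‖Q) ≤ (5·log₂ e/(2·p_min·(1−p_max)²))·r₀`. -/
theorem llr_variance_bounds (k : ℕ) (hk : 2 ≤ k)
    (W : Matrix (Fin k) (Fin k) ℝ)
    (hpos : ∀ x y, 0 < W x y) (hrow : ∀ x, ∑ y, W x y = 1) (hinv : W.det ≠ 0)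
    (Δs : Set (Fin k → ℝ))
    (hΔs : Δs = {f | ∃ p : Fin k → ℝ, (∀ i, 0 ≤ p i) ∧ (∑ i, p i = 1) ∧
        ∀ y, f y = ∑ x, p x * W x y})
    (pmin pmax : ℝ)
    (hpmin : pmin = sInf {x : ℝ | ∃ f ∈ Δs, ∃ y : Fin k, f y = x})
    (hpmax : pmax = sSup {x : ℝ | ∃ f ∈ Δs, ∃ y : Fin k, f y = x})
    (r₀ : ℝ) (hr₀ : 0 < r₀) (hr₀' : r₀ ≤ 2 * Real.logb 2 (Real.exp 1) / 9)
    (r : ℝ) (hr : r = Real.sqrt (r₀ / (2 * Real.logb 2 (Real.exp 1))))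
    (N : ℕ) (hN : N = ⌊1 / r⌋₊)
    (Nstar : Set (Fin k → ℝ))
    (hNstar : Nstar = {f ∈ Δs | ∀ i, ∃ a : ℕ, f i = (a : ℝ) / N}) :
    ∀ P ∈ Nstar, ∀ Q ∈ Nstar, IsNeighbor N P Q →
      (65 * Real.logb 2 (Real.exp 1) / 72) * r₀ ≤ Vllr P Q ∧
      Vllr P Q ≤ (5 * Real.logb 2 (Real.exp 1) / (2 * pmin * (1 - pmax) ^ 2)) * r₀ :=
  llr_variance_bounds_general k W hpos hrow Δs hΔs pmin pmax hpmin hpmax r₀ hr₀ hr₀' r hr N hN Nstar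
    hNstar
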